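/- arXiv:1211.1582 — 5 statements merged into one kernel-verified Lean document; each statement's English description precedes it below -/
import Mathlib

section
/- For every nonnegative integer n, the Bernoulli polynomial satisfies B_n(x) = n! ∑_{k=0}^{n} ( δ_k / (2^k (n-k)!) ∑_{0 ≤ l ≤ n-k, l even} C(n-k, l) B_{n-k-l} l! / (2^l ((2k+l)/2)! (l/2)!) ) T_k(x), where δ_0 = 1 and δ_k = 2 for k ≥ 1. -/
/-!
Expand `B_n(x) = ∑ₘ C(n,m) B_{n-m} x^m` in the Chebyshev basis. Since
`2X T_s = T_{s+1} + T_{s-1}`, induction gives `(2X)^m = ∑_{i+j=m} C(m,i) T_{i-j}`; as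
`T_{-s} = T_s`, the pairs with `|i - j| = k` contribute `δ_k C(m, (m-k)/2)` to `T_k` when
`m ≡ k (mod 2)` (two pairs if `k > 0`, one if `k = 0`), and nothing otherwise. The coefficient of
`T_k` in `B_n` is therefore a sum over `m = k + l` with `l` even, which becomes the stated one once
the binomial coefficients are written with factorials.
-/

open Polynomial Nat Finset

namespace Polynomial.Chebyshev

variable {R : Type*} [CommRing R]

theorem two_mul_X_mul_T (n : ℤ) : 2 * X * T R n = T R (n + 1) + T R (n - 1) := by
  rw [T_add_one]; ring

theorem two_mul_X_pow_eq_sum_antidiagonal (m : ℕ) :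
    (2 * X : R[X]) ^ m = ∑ ij ∈ antidiagonal m, (m.choose ij.1 : R[X]) * T R (ij.1 - ij.2) := by
  induction m with
  | zero => simp
  | succ m ih =>
    rw [Finset.sum_antidiagonal_choose_succ_mul (fun i j => T R ((i : ℤ) - j)),
      _root_.pow_succ', ih, mul_sum, ← sum_add_distrib]
    refine sum_congr rfl fun ij hij => ?_
    rw [Nat.choose_symm_of_eq_add (HasAntidiagonal.mem_antidiagonal.mp hij).symm, mul_left_comm,
      two_mul_X_mul_T]
    push_cast
    ring_nf

/-- The coefficient of `T k` in `(2 * X) ^ m`. -/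
def powCoeff (m k : ℕ) : ℕ :=
  if k ≤ m ∧ Even (m - k) then (if k = 0 then 1 else 2) * m.choose ((m - k) / 2) else 0

theorem sum_choose_filter_natAbs_sub_eq_powCoeff (m k : ℕ) :
    ∑ ij ∈ antidiagonal m with ((ij.1 : ℤ) - ij.2).natAbs = k, m.choose ij.1 =
      powCoeff m k := by
  unfold powCoeff
  split_ifs with hparity
  · obtain ⟨t, ht⟩ := hparity.2
    have hfiber : {ij ∈ antidiagonal m | ((ij.1 : ℤ) - ij.2).natAbs = k} = {(t, t)} := by
      ext ⟨i, j⟩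
      simp only [mem_filter, HasAntidiagonal.mem_antidiagonal, mem_singleton, Prod.mk.injEq]
      omega
    rw [hfiber, sum_singleton, show (m - k) / 2 = t by omega, one_mul]
  · obtain ⟨t, ht⟩ := hparity.2
    have hfiber : {ij ∈ antidiagonal m | ((ij.1 : ℤ) - ij.2).natAbs = k} =
        {(k + t, t), (t, k + t)} := by
      ext ⟨i, j⟩
      simp only [mem_filter, HasAntidiagonal.mem_antidiagonal, mem_insert, mem_singleton,
        Prod.mk.injEq]
      omega
    rw [hfiber, sum_pair (by simp only [ne_eq, Prod.mk.injEq]; omega),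
      Nat.choose_symm_of_eq_add (show m = k + t + t by omega), show (m - k) / 2 = t by omega]
    ring
  · refine sum_eq_zero fun ij hij => absurd ⟨?_, ?_⟩ hparity <;>
      simp only [mem_filter, HasAntidiagonal.mem_antidiagonal] at hij
    · omega
    · exact ⟨min ij.1 ij.2, by omega⟩

theorem two_mul_X_pow_eq_sum_powCoeff_mul_T {m N : ℕ} (h : m ≤ N) :
    (2 * X : R[X]) ^ m = ∑ k ∈ range (N + 1), (powCoeff m k : R[X]) * T R k := by
  rw [two_mul_X_pow_eq_sum_antidiagonal, ← sum_fiberwise_of_maps_to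
    (g := fun ij : ℕ × ℕ => ((ij.1 : ℤ) - ij.2).natAbs) (t := range (N + 1))]
  · refine sum_congr rfl fun k _ => ?_
    rw [← sum_choose_filter_natAbs_sub_eq_powCoeff, Nat.cast_sum, sum_mul]
    refine sum_congr rfl fun ij hij => ?_
    rw [← T_natAbs, (mem_filter.mp hij).2]
  · intro ij hij
    simp only [HasAntidiagonal.mem_antidiagonal, mem_range] at hij ⊢
    omega

theorem sum_range_mul_powCoeff {S : Type*} [Semiring S] (f : ℕ → S) {n k : ℕ} (hk : k ≤ n) :
    ∑ m ∈ range (n + 1), f m * powCoeff m k =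
      ∑ l ∈ range (n - k + 1) with Even l,
        f (k + l) * ((if k = 0 then 1 else 2) * (k + l).choose (l / 2) : ℕ) := by
  rw [show n + 1 = k + (n - k + 1) by omega, sum_range_add, sum_filter]
  rw [sum_eq_zero fun m hm => ?_, zero_add]
  · refine sum_congr rfl fun l _ => ?_
    simp only [powCoeff, le_add_iff_nonneg_right, zero_le, true_and, add_tsub_cancel_left]
    split_ifs <;> simp
  · rw [powCoeff, if_neg (by rw [mem_range] at hm; omega), Nat.cast_zero, mul_zero]

end Polynomial.Chebyshev

theorem X_pow_eq_sum_powCoeff_mul_T {K : Type*} [Field K] [NeZero (2 : K)] {m N : ℕ}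
    (h : m ≤ N) :
    (X : K[X]) ^ m = ∑ k ∈ range (N + 1), C ((Chebyshev.powCoeff m k : K) / 2 ^ m) *
      Chebyshev.T K k := by
  have hX : (X : K[X]) ^ m = C ((2 : K) ^ m)⁻¹ * (2 * X) ^ m := by
    rw [mul_pow, ← mul_assoc, ← C_ofNat, ← C_pow, ← C_mul,
      inv_mul_cancel₀ (pow_ne_zero _ two_ne_zero), C_1, one_mul]
  rw [hX, Chebyshev.two_mul_X_pow_eq_sum_powCoeff_mul_T h, mul_sum]
  refine sum_congr rfl fun k _ => ?_
  rw [← mul_assoc, ← C_eq_natCast, ← C_mul, div_eq_inv_mul]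

theorem sum_bernoulli_mul_powCoeff {n k : ℕ} (hk : k ≤ n) :
    ∑ m ∈ range (n + 1), _root_.bernoulli (n - m) * n.choose m *
        ((Chebyshev.powCoeff m k : ℚ) / 2 ^ m) =
      n ! * ((if k = 0 then (1 : ℚ) else 2) / (2 ^ k * (n - k)!) *
        ∑ l ∈ (range (n - k + 1)).filter (fun l => Even l),
          ((n - k).choose l : ℚ) * _root_.bernoulli (n - k - l) * l ! /
            (2 ^ l * ((2 * k + l) / 2)! * (l / 2)!)) := by
  calc _ = ∑ m ∈ range (n + 1),
          _root_.bernoulli (n - m) * n.choose m / 2 ^ m * (Chebyshev.powCoeff m k : ℚ) :=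
        sum_congr rfl fun m _ => by ring
    _ = _ := by
      rw [Chebyshev.sum_range_mul_powCoeff _ hk, mul_sum, mul_sum]
      refine sum_congr rfl fun l hl => ?_
      obtain ⟨hl_range, t, rfl⟩ := mem_filter.mp hl
      rw [mem_range] at hl_range
      rw [show (2 * k + (t + t)) / 2 = k + t by omega, show (t + t) / 2 = t by omega]
      push_cast
      rw [Nat.cast_choose ℚ (show k + (t + t) ≤ n by omega),
        Nat.cast_choose ℚ (show t ≤ k + (t + t) by omega),
        Nat.cast_choose ℚ (show t + t ≤ n - k by omega),
        show k + (t + t) - t = k + t by omega, show n - (k + (t + t)) = n - k - (t + t) by omega]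
      field_simp
      ring

theorem stmt_5 (n : ℕ) :
    Polynomial.bernoulli n =
      C (n ! : ℚ) *
        ∑ k ∈ Finset.range (n + 1),
          C ((if k = 0 then (1 : ℚ) else 2) / (2 ^ k * (n - k)!) *
              ∑ l ∈ (Finset.range (n - k + 1)).filter (fun l => Even l),
                ((n - k).choose l : ℚ) * _root_.bernoulli (n - k - l) * l ! /
                  (2 ^ l * ((2 * k + l) / 2)! * (l / 2)!)) *
            Polynomial.Chebyshev.T ℚ k := by
  have expand : Polynomial.bernoulli n = ∑ m ∈ range (n + 1), ∑ k ∈ range (n + 1),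
      C (_root_.bernoulli (n - m) * n.choose m * ((Chebyshev.powCoeff m k : ℚ) / 2 ^ m)) *
        Chebyshev.T ℚ k := by
    rw [bernoulli_def]
    refine sum_congr rfl fun m hm => ?_
    rw [← C_mul_X_pow_eq_monomial, X_pow_eq_sum_powCoeff_mul_T (mem_range_succ_iff.mp hm),
      mul_sum]
    simp_rw [← mul_assoc, ← C_mul]
  rw [expand, sum_comm, mul_sum]
  refine sum_congr rfl fun k hk => ?_
  rw [← sum_mul, ← map_sum, sum_bernoulli_mul_powCoeff (mem_range_succ_iff.mp hk), map_mul,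
    mul_assoc]
end

section
/- For every nonnegative integer n, the Hermite polynomial satisfies H_n(x) = n! ∑_{k=0}^{n} ( δ_k ∑_{0 ≤ l ≤ n-k, l even} H_{n-k-l} / ((n-k-l)! ((2k+l)/2)! (l/2)!) ) T_k(x), with δ_0 = 1, δ_k = 2 for k ≥ 1. -/
/-!
Taylor expansion at `0` and `H_n' = 2n H_{n-1}` give the Appell form
`H_n(x) = ∑_j C(n,j) H_{n-j}(0) (2x)^j`. Since `2x = e^{iθ} + e^{-iθ}` for `x = cos θ`, we have
`(2x)^j = ∑_q C(j,q) T_{|j-2q|}(x)`; the indices `q = (j ∓ k)/2` are the two (for `k = 0`, one)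
with `|j - 2q| = k`, which produces the factor `δ_k`. Writing `j = k + l`, the coefficient
`C(n,k+l) C(k+l,l/2)` is the trinomial coefficient `n! / ((n-k-l)! (k+l/2)! (l/2)!)`.
-/

open Polynomial Nat

/-- The physicists' Hermite polynomials, with generating function
`e^{2xt - t²} = ∑ H n (x) tⁿ/n!`, via the recurrence `H_{n+1} = 2x H_n - H_n'`. -/
noncomputable def physHermite : ℕ → ℚ[X]
  | 0 => 1
  | n + 1 => C 2 * X * physHermite n - derivative (physHermite n)

theorem physHermite_succ (n : ℕ) :
    physHermite (n + 1) = 2 * X * physHermite n - derivative (physHermite n) := by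
  rw [physHermite, C_ofNat]

theorem derivative_physHermite :
    ∀ n, derivative (physHermite n) = 2 * n * physHermite (n - 1)
  | 0 => by simp [physHermite]
  | 1 => by simp [physHermite_succ, physHermite.eq_1]
  | n + 2 => by
    have h₁ : derivative (physHermite (n + 1)) = 2 * (n + 1 : ℕ) * physHermite n :=
      derivative_physHermite (n + 1)
    have h₀ := derivative_physHermite n
    rw [physHermite_succ, derivative_sub, derivative_mul, h₁, show n + 2 - 1 = n + 1 from rfl,
      physHermite_succ n, h₀]
    simp only [derivative_mul, derivative_X, derivative_natCast, derivative_ofNat, h₀]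
    push_cast
    ring

theorem iterate_derivative_physHermite (n j : ℕ) :
    derivative^[j] (physHermite n) = 2 ^ j * n.descFactorial j * physHermite (n - j) := by
  induction j with
  | zero => simp
  | succ j ih =>
    rw [Function.iterate_succ_apply', ih, mul_comm, derivative_mul, derivative_physHermite,
      Nat.descFactorial_succ, Nat.sub_sub]
    simp only [derivative_mul, derivative_natCast, derivative_ofNat, derivative_pow]
    push_cast
    ring

theorem coeff_physHermite (n j : ℕ) :
    (physHermite n).coeff j = 2 ^ j * n.choose j * (physHermite (n - j)).eval 0 := by
  have h := congrArg (coeff · 0) (iterate_derivative_physHermite n j)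
  rw [coeff_iterate_derivative, zero_add, Nat.descFactorial_self, nsmul_eq_mul,
    Nat.descFactorial_eq_factorial_mul_choose, coeff_zero_eq_eval_zero] at h
  simp only [eval_mul, eval_pow, eval_ofNat, eval_natCast] at h
  push_cast at h
  refine mul_left_cancel₀ (by positivity : (j ! : ℚ) ≠ 0) ?_
  linear_combination h

theorem physHermite_eq_sum_pow (n : ℕ) :
    physHermite n = ∑ j ∈ Finset.range (n + 1),
      C (n.choose j * (physHermite (n - j)).eval 0) * (2 * X) ^ j := by
  ext i
  simp only [finsetSum_coeff, mul_pow, ← C_ofNat, ← C_pow, ← mul_assoc, ← C_mul, coeff_C_mul_X_pow]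
  simp only [Finset.sum_ite_eq, Finset.mem_range, coeff_physHermite]
  split_ifs with h
  · ring
  · simp [Nat.choose_eq_zero_of_lt (by omega : n < i)]

theorem Nat.sum_choose_filter_natAbs_sub_two_mul_eq {j k : ℕ} (hk : k ≤ j)
    (he : Even (j - k)) :
    ∑ q ∈ (Finset.range (j + 1)).filter (fun q : ℕ => (j - 2 * q : ℤ).natAbs = k), j.choose q =
      (if k = 0 then 1 else 2) * j.choose ((j - k) / 2) := by
  rw [Nat.even_iff] at he
  have hfiber : (Finset.range (j + 1)).filter (fun q : ℕ => (j - 2 * q : ℤ).natAbs = k) =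
      {(j - k) / 2, j - (j - k) / 2} := by
    ext q
    simp only [Finset.mem_filter, Finset.mem_range, Finset.mem_insert, Finset.mem_singleton]
    omega
  rw [hfiber]
  split_ifs with hk0
  · subst hk0
    rw [show j - (j - 0) / 2 = (j - 0) / 2 by omega, Finset.pair_eq_singleton,
      Finset.sum_singleton, one_mul]
  · rw [Finset.sum_pair (by omega), Nat.choose_symm (by omega)]
    ring

namespace Polynomial.Chebyshev

variable {R : Type*} [CommRing R]

theorem two_mul_X_pow_eq_sum_choose_T (j : ℕ) :
    (2 * X : R[X]) ^ j = ∑ q ∈ Finset.range (j + 1), (j.choose q : R[X]) * T R (j - 2 * q : ℤ) := by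
  induction j with
  | zero => simp
  | succ j ih =>
    have h2X (q : ℕ) : 2 * X * ((j.choose q : R[X]) * T R (j - 2 * q : ℤ)) =
        (j.choose q : R[X]) * T R (j + 1 - 2 * q : ℤ) +
          (j.choose q : R[X]) * T R (j + 1 - 2 * (q + 1) : ℤ) := by
      rw [show (j + 1 - 2 * q : ℤ) = j - 2 * q + 1 by ring, T_add_one]
      ring_nf
    have hshift : ∑ q ∈ Finset.range (j + 1), (j.choose q : R[X]) * T R (j + 1 - 2 * q : ℤ) =
        T R (j + 1 : ℤ) + ∑ q ∈ Finset.range (j + 1),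
          (j.choose (q + 1) : R[X]) * T R (j + 1 - 2 * (q + 1) : ℤ) := by
      rw [Finset.sum_range_succ', Finset.sum_range_succ _ j, Nat.choose_succ_self]
      simp [add_comm]
    rw [_root_.pow_succ', ih, Finset.mul_sum, Finset.sum_range_succ' _ (j + 1)]
    simp only [h2X, Finset.sum_add_distrib, hshift, Nat.choose_succ_succ', Nat.cast_add, add_mul]
    simp only [Nat.choose_zero_right, Nat.cast_one, one_mul, Nat.cast_zero, mul_zero, sub_zero]
    abel

theorem two_mul_X_pow_eq_sum_T (j : ℕ) :
    (2 * X : R[X]) ^ j = ∑ k ∈ Finset.range (j + 1) with Even (j - k),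
      (((if k = 0 then 1 else 2) * j.choose ((j - k) / 2) : ℕ) : R[X]) * T R k := by
  have hmaps : ∀ q ∈ Finset.range (j + 1),
      (j - 2 * q : ℤ).natAbs ∈ {k ∈ Finset.range (j + 1) | Even (j - k)} := by
    intro q hq
    simp only [Finset.mem_filter, Finset.mem_range, Nat.even_iff] at hq ⊢
    omega
  rw [two_mul_X_pow_eq_sum_choose_T,
    Finset.sum_congr rfl fun q _ => by rw [← T_natAbs R (j - 2 * q : ℤ)],
    ← Finset.sum_fiberwise_of_maps_to hmaps]
  refine Finset.sum_congr rfl fun k hk => ?_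
  rw [Finset.mem_filter, Finset.mem_range] at hk
  rw [← Nat.sum_choose_filter_natAbs_sub_two_mul_eq (by omega) hk.2, Nat.cast_sum, Finset.sum_mul]
  refine Finset.sum_congr rfl fun q hq => ?_
  rw [(Finset.mem_filter.1 hq).2]

end Polynomial.Chebyshev

theorem Nat.cast_choose_mul_choose_half {K : Type*} [Field K] [CharZero K] {n k l : ℕ}
    (hkl : k + l ≤ n) (hl : Even l) :
    (n.choose (k + l) * (k + l).choose (l / 2) : K) =
      n ! / ((n - k - l)! * ((2 * k + l) / 2)! * (l / 2)!) := by
  obtain ⟨a, rfl⟩ := hl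
  rw [Nat.cast_choose K hkl, Nat.cast_choose K (by omega : (a + a) / 2 ≤ k + (a + a)),
    show (a + a) / 2 = a by omega, show (2 * k + (a + a)) / 2 = k + a by omega,
    show k + (a + a) - a = k + a by omega, Nat.sub_sub]
  have : ((k + (a + a))! : K) ≠ 0 := Nat.cast_ne_zero.2 (factorial_ne_zero _)
  field_simp

theorem physHermite_eq_sum_T (n : ℕ) :
    physHermite n = ∑ k ∈ Finset.range (n + 1),
      C ((if k = 0 then (1 : ℚ) else 2) * ∑ l ∈ (Finset.range (n - k + 1)).filter (fun l => Even l),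
        n.choose (k + l) * (k + l).choose (l / 2) * (physHermite (n - k - l)).eval 0) *
        Chebyshev.T ℚ k := by
  let f : ℕ → ℕ → ℚ[X] := fun k l => C (n.choose (k + l) * (physHermite (n - (k + l))).eval 0) *
      if Even l then (((if k = 0 then 1 else 2) * (k + l).choose (l / 2) : ℕ) : ℚ[X]) *
        Chebyshev.T ℚ k else 0
  calc physHermite n
      = ∑ j ∈ Finset.range (n + 1), ∑ k ∈ Finset.range (j + 1), f k (j - k) := by
        rw [physHermite_eq_sum_pow]
        refine Finset.sum_congr rfl fun j _ => ?_
        rw [Chebyshev.two_mul_X_pow_eq_sum_T, Finset.sum_filter, Finset.mul_sum]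
        refine Finset.sum_congr rfl fun k hk => ?_
        simp only [f, Nat.add_sub_cancel' (Finset.mem_range_succ_iff.1 hk)]
    _ = ∑ k ∈ Finset.range (n + 1), ∑ l ∈ Finset.range (n + 1 - k), f k l :=
        Finset.sum_range_diag_flip _ _
    _ = _ := by
        refine Finset.sum_congr rfl fun k hk => ?_
        rw [Finset.mem_range] at hk
        rw [show n + 1 - k = n - k + 1 by omega, Finset.sum_filter, Finset.mul_sum, map_sum,
          Finset.sum_mul]
        refine Finset.sum_congr rfl fun l _ => ?_
        split_ifs <;> simp [f, C_mul, C_ofNat, Nat.sub_sub, *] <;> ring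

theorem stmt_7 (n : ℕ) :
    physHermite n =
      C (n ! : ℚ) *
        ∑ k ∈ Finset.range (n + 1),
          C ((if k = 0 then (1 : ℚ) else 2) *
              ∑ l ∈ (Finset.range (n - k + 1)).filter (fun l => Even l),
                (physHermite (n - k - l)).eval 0 /
                  ((n - k - l)! * ((2 * k + l) / 2)! * (l / 2)!)) *
            Polynomial.Chebyshev.T ℚ k := by
  rw [physHermite_eq_sum_T, Finset.mul_sum]
  refine Finset.sum_congr rfl fun k hk => ?_
  rw [← mul_assoc, ← C_mul]
  congr 2
  simp only [Finset.mul_sum]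
  refine Finset.sum_congr rfl fun l hl => ?_
  simp only [Finset.mem_filter, Finset.mem_range] at hk hl
  rw [Nat.cast_choose_mul_choose_half (by omega) hl.2]
  ring
end

section
/- For every nonnegative integer n, B_n(x) = n! ∑_{k=0}^{n} ( (k+1)/2^k ∑_{0 ≤ l ≤ n-k, l even} B_{n-k-l} / (2^l (n-k-l)! ((2k+l+2)/2)! (l/2)!) ) U_k(x). -/
/-!
Expanding `X ^ m` in the basis `U k` via `2 X U k = U (k + 1) + U (k - 1)` gives the ballot-number
coefficient `2⁻ᵐ (choose m j - choose m (j - 1)) = (k + 1) m! / (2 ^ m j! (k + j + 1)!)` for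
`m = k + 2 j`, and `0` when `m - k` is odd or negative. Substituting this into
`B_n(X) = ∑ᵢ choose n i B_{n-i} X ^ i` and collecting the coefficient of `U k` leaves the sum
over `i = k + l` with `l` even.
-/

open Polynomial Nat Finset

-- the coefficient of `U k` in the expansion of `X ^ m`
def chebyshevUCoeff (m k : ℕ) : ℚ :=
  if k ≤ m ∧ Even (m + k) then
    (k + 1) * m ! / (2 ^ m * ((m - k) / 2)! * ((m + k) / 2 + 1)!)
  else 0

lemma chebyshevUCoeff_of_lt {m k : ℕ} (h : m < k) : chebyshevUCoeff m k = 0 :=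
  if_neg fun h' => by omega

lemma chebyshevUCoeff_of_odd {m k : ℕ} (h : Odd (m + k)) : chebyshevUCoeff m k = 0 :=
  if_neg fun h' => Nat.not_even_iff_odd.2 h h'.2

lemma chebyshevUCoeff_add_two_mul (k j : ℕ) :
    chebyshevUCoeff (k + 2 * j) k =
      (k + 1) * (k + 2 * j)! / (2 ^ (k + 2 * j) * j ! * (k + j + 1)!) := by
  rw [chebyshevUCoeff, if_pos ⟨by omega, ⟨k + j, by omega⟩⟩,
    show (k + 2 * j - k) / 2 = j by omega, show (k + 2 * j + k) / 2 + 1 = k + j + 1 by omega]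

lemma chebyshevUCoeff_succ_succ (m k : ℕ) :
    chebyshevUCoeff (m + 1) (k + 1) = chebyshevUCoeff m k / 2 + chebyshevUCoeff m (k + 2) / 2 := by
  rcases Nat.even_or_odd (m + k) with hmk | hmk
  · rcases le_or_gt k m with hkm | hkm
    · obtain ⟨j, rfl⟩ : ∃ j, m = k + 2 * j :=
        ⟨(m - k) / 2, by rcases hmk with ⟨r, hr⟩; omega⟩
      rw [show k + 2 * j + 1 = (k + 1) + 2 * j by ring, chebyshevUCoeff_add_two_mul,
        chebyshevUCoeff_add_two_mul]
      rcases j with _ | j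
      · rw [chebyshevUCoeff_of_lt (by omega)]
        simp only [mul_zero, add_zero, Nat.factorial_zero]
        push_cast [Nat.factorial_succ]
        field_simp
        ring
      · rw [show k + 2 * (j + 1) = (k + 2) + 2 * j by ring, chebyshevUCoeff_add_two_mul,
          show k + 1 + 2 * (j + 1) = k + 2 * j + 1 + 1 + 1 by ring,
          show k + 2 + 2 * j = k + 2 * j + 1 + 1 by ring,
          show k + 1 + (j + 1) + 1 = k + j + 2 + 1 by ring,
          show k + (j + 1) + 1 = k + j + 1 + 1 by ring,
          show k + 2 + j + 1 = k + j + 2 + 1 by ring]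
        push_cast [Nat.factorial_succ]
        field_simp
        ring
    · simp [chebyshevUCoeff_of_lt, hkm, show m < k + 2 by omega]
  · rw [chebyshevUCoeff_of_odd (by grind), chebyshevUCoeff_of_odd hmk,
      chebyshevUCoeff_of_odd (by grind)]
    ring

lemma chebyshevUCoeff_succ_zero (m : ℕ) :
    chebyshevUCoeff (m + 1) 0 = chebyshevUCoeff m 1 / 2 := by
  rcases Nat.even_or_odd m with hm | hm
  · rw [chebyshevUCoeff_of_odd (by grind), chebyshevUCoeff_of_odd (by grind)]
    ring
  · obtain ⟨j, rfl⟩ := hm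
    rw [show 2 * j + 1 + 1 = 0 + 2 * (j + 1) by ring, show 2 * j + 1 = 1 + 2 * j by ring,
      chebyshevUCoeff_add_two_mul, chebyshevUCoeff_add_two_mul]
    push_cast [Nat.factorial_succ, show 0 + 2 * (j + 1) = 2 * j + 1 + 1 by ring,
      show 1 + 2 * j = 2 * j + 1 by ring, show 0 + (j + 1) + 1 = j + 2 by ring,
      show 1 + j + 1 = j + 2 by ring]
    field_simp
    ring

open Polynomial.Chebyshev (U)

theorem two_mul_X_mul_chebyshevU (R : Type*) [CommRing R] (n : ℤ) :
    2 * X * U R n = U R (n + 1) + U R (n - 1) := by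
  rw [Chebyshev.U_add_one]; ring

variable {K : Type*} [Field K] [CharZero K]

theorem C_mul_chebyshevU_mul_X (c : K) (n : ℤ) :
    C c * U K n * X = C (c / 2) * U K (n + 1) + C (c / 2) * U K (n - 1) := by
  have hc : C c = C (c / 2) * 2 := by
    rw [← map_ofNat C 2, ← C_mul, div_mul_cancel₀ c two_ne_zero]
  linear_combination U K n * X * hc + C (c / 2) * two_mul_X_mul_chebyshevU K n

theorem X_pow_eq_sum_chebyshevU (m : ℕ) :
    (X : K[X]) ^ m = ∑ k ∈ range (m + 1), C (chebyshevUCoeff m k : K) * U K k := by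
  induction m with
  | zero => simp [chebyshevUCoeff]
  | succ m ih =>
    set a := fun k => (chebyshevUCoeff m k : K) / 2
    have hdown : ∑ k ∈ range (m + 1), C (a k) * U K ((k : ℤ) - 1) =
        ∑ k ∈ range m, C (a (k + 1)) * U K k := by
      simp [sum_range_succ' _ m]
    have hup : ∑ k ∈ range (m + 2), C (a (k + 1)) * U K k =
        ∑ k ∈ range (m + 1), C (a (k + 2)) * U K ((k : ℤ) + 1) + C (a 1) * U K 0 := by
      simp [sum_range_succ' _ (m + 1)]
    have htrunc : ∑ k ∈ range (m + 2), C (a (k + 1)) * U K k =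
        ∑ k ∈ range m, C (a (k + 1)) * U K k := by
      simp [sum_range_succ, a, chebyshevUCoeff_of_lt]
    calc (X : K[X]) ^ (m + 1)
        = ∑ k ∈ range (m + 1),
            (C (a k) * U K ((k : ℤ) + 1) + C (a k) * U K ((k : ℤ) - 1)) := by
          simp only [pow_succ, ih, sum_mul, C_mul_chebyshevU_mul_X, a]
      _ = ∑ k ∈ range (m + 1), C (a k + a (k + 2)) * U K ((k : ℤ) + 1) + C (a 1) * U K 0 := by
          rw [sum_add_distrib, hdown, ← htrunc, hup]
          simp only [C_add, add_mul, sum_add_distrib]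
          ring
      _ = _ := by
          rw [sum_range_succ' _ (m + 1)]
          push_cast [chebyshevUCoeff_succ_succ, chebyshevUCoeff_succ_zero, a]
          rfl

theorem X_pow_eq_sum_range_chebyshevU {m N : ℕ} (h : m < N) :
    (X : K[X]) ^ m = ∑ k ∈ range N, C (chebyshevUCoeff m k : K) * U K k := by
  rw [X_pow_eq_sum_chebyshevU]
  refine sum_subset (range_subset_range.2 h) fun k _ hk => ?_
  rw [chebyshevUCoeff_of_lt (by simpa using hk), Rat.cast_zero, map_zero, zero_mul]

lemma sum_bernoulli_mul_choose_mul_chebyshevUCoeff {n k : ℕ} (hk : k ≤ n) :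
    ∑ i ∈ range (n + 1), _root_.bernoulli (n - i) * n.choose i * chebyshevUCoeff i k =
      (n ! : ℚ) * (((k : ℚ) + 1) / 2 ^ k *
        ∑ l ∈ (range (n - k + 1)).filter (fun l => Even l),
          _root_.bernoulli (n - k - l) /
            (2 ^ l * (n - k - l)! * ((2 * k + l + 2) / 2)! * (l / 2)!)) := by
  have hlow : ∀ i ∈ range k, _root_.bernoulli (n - i) * n.choose i * chebyshevUCoeff i k = 0 :=
    fun i hi => by rw [chebyshevUCoeff_of_lt (mem_range.1 hi), mul_zero]
  have hodd : ∀ l ∈ range (n - k + 1),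
      _root_.bernoulli (n - (k + l)) * n.choose (k + l) * chebyshevUCoeff (k + l) k ≠ 0 →
        Even l := fun l _ hl =>
    Nat.not_odd_iff_even.1 fun hl_odd => hl (by rw [chebyshevUCoeff_of_odd (by grind), mul_zero])
  rw [show n + 1 = k + (n - k + 1) by omega, sum_range_add, sum_eq_zero hlow, zero_add,
    ← sum_filter_of_ne hodd, mul_sum, mul_sum]
  refine sum_congr rfl fun l hl => ?_
  obtain ⟨hln, j, rfl⟩ : l ≤ n - k ∧ 2 ∣ l := by simpa [even_iff_two_dvd] using hl
  rw [show (2 * k + 2 * j + 2) / 2 = k + j + 1 by omega, show 2 * j / 2 = j by omega,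
    show n - k - 2 * j = n - (k + 2 * j) by omega, chebyshevUCoeff_add_two_mul,
    Nat.cast_choose ℚ (by omega : k + 2 * j ≤ n), pow_add]
  field_simp

theorem stmt_8 (n : ℕ) :
    Polynomial.bernoulli n =
      C (n ! : ℚ) *
        ∑ k ∈ Finset.range (n + 1),
          C (((k : ℚ) + 1) / 2 ^ k *
              ∑ l ∈ (Finset.range (n - k + 1)).filter (fun l => Even l),
                _root_.bernoulli (n - k - l) /
                  (2 ^ l * (n - k - l)! * ((2 * k + l + 2) / 2)! * (l / 2)!)) *
            Polynomial.Chebyshev.U ℚ k := by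
  rw [bernoulli_def, mul_sum]
  calc ∑ i ∈ range (n + 1), monomial i (_root_.bernoulli (n - i) * n.choose i)
      = ∑ i ∈ range (n + 1), ∑ k ∈ range (n + 1),
          C (_root_.bernoulli (n - i) * n.choose i * chebyshevUCoeff i k) * U ℚ k := by
        refine sum_congr rfl fun i hi => ?_
        rw [← C_mul_X_pow_eq_monomial, X_pow_eq_sum_range_chebyshevU (mem_range.1 hi), mul_sum]
        simp only [Rat.cast_id, C_mul, mul_assoc]
    _ = ∑ k ∈ range (n + 1), C (∑ i ∈ range (n + 1),
          _root_.bernoulli (n - i) * n.choose i * chebyshevUCoeff i k) * U ℚ k := by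
        rw [sum_comm]
        simp only [map_sum, sum_mul]
    _ = _ := sum_congr rfl fun k hk => by
        rw [sum_bernoulli_mul_choose_mul_chebyshevUCoeff (by simpa [Nat.lt_succ_iff] using hk),
          C_mul, mul_assoc]
end

section
/- For every nonnegative integer n, E_n(x) = n! ∑_{k=0}^{n} ( (k+1)/2^k ∑_{0 ≤ l ≤ n-k, l even} E_{n-k-l} / (2^l (n-k-l)! ((2k+l+2)/2)! (l/2)!) ) U_k(x). -/
/-!
Evaluating the defining recurrence at `0` shows that the Euler polynomials form an Appell
sequence: `E_n(x) = ∑_m C(n,m) E_{n-m} x^m`. Each monomial `x^m` is expanded in the basis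
`U_k` by induction on `m`, using `2 x U_k = U_{k+1} + U_{k-1}`. Collecting the coefficient of
`U_k` and writing `m = k + l` gives the formula.
-/

open Polynomial Nat

/-- The Euler polynomials `E n`, defined by the recurrence
`E n + ∑_{k ≤ n} C(n,k) E k = 2 xⁿ`, equivalent to the generating function
`2 e^{xt}/(e^t + 1) = ∑ E n (x) tⁿ/n!`. -/
noncomputable def eulerPoly : ℕ → ℚ[X]
  | n => X ^ n - C (1 / 2) * ∑ k : Fin n, C ((n.choose k : ℚ)) * eulerPoly k
decreasing_by exact k.isLt

open Finset

theorem sum_range_choose_mul_choose_mul {R : Type*} [CommSemiring R] (f : ℕ → R) (n m : ℕ) :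
    ∑ k ∈ range n, (n.choose k : R) * ((k.choose m : R) * f (k - m)) =
      n.choose m * ∑ i ∈ range (n - m), ((n - m).choose i : R) * f i := by
  rcases lt_or_ge n m with hnm | hmn
  · rw [Nat.sub_eq_zero_of_le hnm.le, sum_range_zero, mul_zero]
    exact sum_eq_zero fun k hk => by
      rw [Nat.choose_eq_zero_of_lt ((mem_range.1 hk).trans hnm), Nat.cast_zero, zero_mul, mul_zero]
  rw [range_eq_Ico, ← sum_Ico_consecutive _ (Nat.zero_le m) hmn,
    sum_eq_zero fun k hk => by simp [Nat.choose_eq_zero_of_lt (mem_Ico.1 hk).2], zero_add,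
    sum_Ico_eq_sum_range, mul_sum]
  refine sum_congr rfl fun i _ => ?_
  rw [add_tsub_cancel_left, ← mul_assoc, ← Nat.cast_mul,
    Nat.choose_mul (Nat.le_add_right m i), add_tsub_cancel_left, Nat.cast_mul, mul_assoc]

theorem eulerPoly_eq (n : ℕ) :
    eulerPoly n = X ^ n - C (1 / 2) * ∑ k ∈ range n, C (n.choose k : ℚ) * eulerPoly k := by
  rw [eulerPoly, ← sum_range fun k => C (n.choose k : ℚ) * eulerPoly k]

theorem sum_range_choose_mul_eulerPoly_eval_zero (n : ℕ) :
    ∑ k ∈ range n, (n.choose k : ℚ) * (eulerPoly k).eval 0 =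
      2 * 0 ^ n - 2 * (eulerPoly n).eval 0 := by
  have h := congrArg (eval 0) (eulerPoly_eq n)
  simp only [eval_sub, eval_pow, eval_X, eval_mul, eval_C, eval_finsetSum] at h
  linarith

theorem coeff_eulerPoly (n m : ℕ) :
    (eulerPoly n).coeff m = n.choose m * (eulerPoly (n - m)).eval 0 := by
  induction n using Nat.strong_induction_on with
  | _ n ih =>
  have hsum : ∑ k ∈ range n, (n.choose k : ℚ) * (eulerPoly k).coeff m =
      n.choose m * (2 * 0 ^ (n - m) - 2 * (eulerPoly (n - m)).eval 0) := by
    rw [← sum_range_choose_mul_eulerPoly_eval_zero, ← sum_range_choose_mul_choose_mul]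
    exact sum_congr rfl fun k hk => by rw [ih k (mem_range.1 hk)]
  have hdiag : ((X : ℚ[X]) ^ n).coeff m = n.choose m * 0 ^ (n - m) := by
    rcases lt_trichotomy m n with h | rfl | h
    · simp [coeff_X_pow, h.ne, Nat.sub_ne_zero_of_lt h]
    · simp
    · simp [coeff_X_pow, h.ne', Nat.choose_eq_zero_of_lt h]
  rw [eulerPoly_eq, coeff_sub, coeff_C_mul, finsetSum_coeff]
  simp only [coeff_C_mul]
  rw [hsum, hdiag]
  ring

theorem eulerPoly_eq_sum (n : ℕ) :
    eulerPoly n = ∑ m ∈ range (n + 1), C (n.choose m * (eulerPoly (n - m)).eval 0) * X ^ m := by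
  have hdeg : (eulerPoly n).natDegree < n + 1 := by
    refine Nat.lt_succ_of_le (natDegree_le_iff_coeff_eq_zero.2 fun m hm => ?_)
    simp [coeff_eulerPoly, Nat.choose_eq_zero_of_lt hm]
  conv_lhs => rw [as_sum_range_C_mul_X_pow' _ hdeg]
  simp only [coeff_eulerPoly]

theorem X_mul_C_mul_chebyshevU {K : Type*} [Field K] [NeZero (2 : K)] (c : K) (j : ℤ) :
    X * (C c * Chebyshev.U K j) =
      C (c / 2) * Chebyshev.U K (j + 1) + C (c / 2) * Chebyshev.U K (j - 1) := by
  have h2 : C (c / 2) * 2 = C c := by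
    rw [← C_ofNat, ← C_mul, div_mul_cancel₀ c two_ne_zero]
  linear_combination (-C (c / 2)) * Chebyshev.U_sub_one K j - (X * Chebyshev.U K j) * h2

/-- The coefficient of `U_k` in `X ^ m`, i.e. `2⁻ᵐ (C(m, j) - C(m, j - 1))` with `m = k + 2 j`,
written with factorials. -/
noncomputable def xPowCoeffU (m k : ℕ) : ℚ :=
  if k ≤ m ∧ Even (m - k) then
    m ! * (k + 1) / (2 ^ m * ((m - k) / 2)! * ((m + k + 2) / 2)!)
  else 0

theorem xPowCoeffU_of_eq {m k : ℕ} (a b : ℕ) (hm : m = k + 2 * a) (hb : b = k + a + 1) :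
    xPowCoeffU m k = m ! * (k + 1) / (2 ^ m * a ! * b !) := by
  rw [xPowCoeffU, if_pos ⟨by omega, ⟨a, by omega⟩⟩, show (m - k) / 2 = a by omega,
    show (m + k + 2) / 2 = b by omega]

theorem xPowCoeffU_of_not {m k : ℕ} (h : ¬(k ≤ m ∧ Even (m - k))) : xPowCoeffU m k = 0 :=
  if_neg h

theorem xPowCoeffU_of_lt {m k : ℕ} (h : m < k) : xPowCoeffU m k = 0 :=
  xPowCoeffU_of_not (by omega)

theorem xPowCoeffU_succ_succ (m k : ℕ) :
    xPowCoeffU (m + 1) (k + 1) = (xPowCoeffU m k + xPowCoeffU m (k + 2)) / 2 := by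
  by_cases h : k ≤ m ∧ Even (m - k)
  swap
  · rw [xPowCoeffU_of_not h, xPowCoeffU_of_not (by grind), xPowCoeffU_of_not (by grind)]
    norm_num
  obtain ⟨hkm, a, ha⟩ := h
  rcases a with _ | a
  · obtain rfl : k = m := by omega
    rw [xPowCoeffU_of_eq 0 (k + 2) (by ring) rfl, xPowCoeffU_of_eq 0 (k + 1) (by ring) rfl,
      xPowCoeffU_of_lt (by omega)]
    push_cast [Nat.factorial_succ, pow_succ]
    field_simp
    ring
  · obtain rfl : m = k + 2 * a + 2 := by omega
    rw [xPowCoeffU_of_eq (a + 1) (k + a + 3) (by ring) (by ring),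
      xPowCoeffU_of_eq (a + 1) (k + a + 2) (by ring) (by ring),
      xPowCoeffU_of_eq a (k + a + 3) (by ring) (by ring)]
    push_cast [Nat.factorial_succ, pow_succ]
    field_simp
    ring

theorem xPowCoeffU_succ_zero (m : ℕ) : xPowCoeffU (m + 1) 0 = xPowCoeffU m 1 / 2 := by
  rcases Nat.even_or_odd m with hm | ⟨c, rfl⟩
  · rw [xPowCoeffU_of_not (by grind), xPowCoeffU_of_not (by grind)]
    norm_num
  rw [xPowCoeffU_of_eq (c + 1) (c + 2) (by ring) (by ring),
    xPowCoeffU_of_eq c (c + 2) (by ring) (by ring)]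
  push_cast [Nat.factorial_succ, pow_succ]
  field_simp
  ring

theorem X_pow_eq_sum_xPowCoeffU_mul_U (m : ℕ) :
    (X : ℚ[X]) ^ m = ∑ k ∈ range (m + 1), C (xPowCoeffU m k) * Chebyshev.U ℚ k := by
  induction m with
  | zero => simp [xPowCoeffU_of_eq 0 1 rfl rfl, Chebyshev.U_zero]
  | succ m ih =>
  have hshift : ∑ k ∈ range (m + 1), C (xPowCoeffU m k / 2) * Chebyshev.U ℚ ((k : ℤ) - 1) =
      ∑ k ∈ range (m + 2), C (xPowCoeffU m (k + 1) / 2) * Chebyshev.U ℚ k := by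
    rw [sum_range_succ', sum_range_succ _ (m + 1), sum_range_succ _ m,
      xPowCoeffU_of_lt (by omega : m < m + 1 + 1), xPowCoeffU_of_lt (by omega : m < m + 1)]
    simp [Chebyshev.U_neg_one]
  rw [sum_range_succ', xPowCoeffU_succ_zero, _root_.pow_succ', ih, mul_sum]
  simp only [X_mul_C_mul_chebyshevU, sum_add_distrib, hshift]
  rw [sum_range_succ' (fun k => C (xPowCoeffU m (k + 1) / 2) * Chebyshev.U ℚ k)]
  simp only [xPowCoeffU_succ_succ, add_div, C_add, add_mul, sum_add_distrib]
  push_cast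
  ring

theorem X_pow_eq_sum_range_xPowCoeffU_mul_U {m N : ℕ} (h : m ≤ N) :
    (X : ℚ[X]) ^ m = ∑ k ∈ range (N + 1), C (xPowCoeffU m k) * Chebyshev.U ℚ k := by
  rw [X_pow_eq_sum_xPowCoeffU_mul_U]
  refine sum_subset (range_subset_range.2 (by omega)) fun k _ hk => ?_
  rw [xPowCoeffU_of_lt (by simpa using hk), C_0, zero_mul]

theorem sum_choose_mul_xPowCoeffU (e : ℕ → ℚ) {n k : ℕ} (hk : k ≤ n) :
    ∑ m ∈ range (n + 1), n.choose m * e (n - m) * xPowCoeffU m k =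
      n ! * ((k + 1) / 2 ^ k * ∑ l ∈ (range (n - k + 1)).filter Even,
        e (n - k - l) / (2 ^ l * (n - k - l)! * ((2 * k + l + 2) / 2)! * (l / 2)!)) := by
  rw [range_eq_Ico, ← sum_Ico_consecutive _ (Nat.zero_le k) (by omega : k ≤ n + 1),
    sum_eq_zero fun m hm => by rw [xPowCoeffU_of_lt (mem_Ico.1 hm).2, mul_zero], zero_add,
    sum_Ico_eq_sum_range, sum_filter, mul_sum, mul_sum, show n + 1 - k = n - k + 1 by omega]
  refine sum_congr rfl fun l hl => ?_
  rcases Nat.even_or_odd l with ⟨a, rfl⟩ | hodd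
  swap
  · rw [if_neg (Nat.not_even_iff_odd.2 hodd), xPowCoeffU_of_not (by grind)]
    simp
  have hkl : k + (a + a) ≤ n := by have := mem_range.1 hl; omega
  have hfac : (n.choose (k + (a + a)) : ℚ) * (k + (a + a))! * (n - k - (a + a))! = n ! := by
    rw [show n - k - (a + a) = n - (k + (a + a)) by omega]
    exact_mod_cast Nat.choose_mul_factorial_mul_factorial hkl
  rw [if_pos ⟨a, rfl⟩, xPowCoeffU_of_eq a (k + a + 1) (by ring) rfl,
    show (2 * k + (a + a) + 2) / 2 = k + a + 1 by omega, show (a + a) / 2 = a by omega,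
    show n - (k + (a + a)) = n - k - (a + a) by omega, pow_add]
  generalize k + (a + a) = m at hfac ⊢
  field_simp
  linear_combination e (n - k - (a + a)) * hfac

theorem stmt_9 (n : ℕ) :
    eulerPoly n =
      C (n ! : ℚ) *
        ∑ k ∈ Finset.range (n + 1),
          C (((k : ℚ) + 1) / 2 ^ k *
              ∑ l ∈ (Finset.range (n - k + 1)).filter (fun l => Even l),
                (eulerPoly (n - k - l)).eval 0 /
                  (2 ^ l * (n - k - l)! * ((2 * k + l + 2) / 2)! * (l / 2)!)) *
            Polynomial.Chebyshev.U ℚ k := by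
  conv_lhs => rw [eulerPoly_eq_sum]
  rw [sum_congr rfl fun m hm => by
      rw [X_pow_eq_sum_range_xPowCoeffU_mul_U (Nat.lt_succ_iff.1 (mem_range.1 hm)), mul_sum],
    sum_comm, mul_sum]
  refine sum_congr rfl fun k hk => ?_
  rw [← mul_assoc, ← C_mul, ← sum_choose_mul_xPowCoeffU (fun i => (eulerPoly i).eval 0)
    (Nat.lt_succ_iff.1 (mem_range.1 hk)), map_sum, sum_mul]
  simp only [C_mul, mul_assoc]
end

section
/- For every nonnegative integer n and x in (-1,1), T_n(x) = ((-1)^n 2^n n! / (2n)!) √(1-x^2) · d^n/dx^n [ (1-x^2)^{n-1/2} ] (Rodrigues' formula for Chebyshev polynomials of the first kind). -/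
open Polynomial Nat Set Filter Topology

/-!
Write `f_a y = (1 - y²) ^ a`. Differentiating `f_{a+1}' = -2(a+1) y f_a` `k` times and
`f_{a+1} = f_a - y (y f_a)` `k + 1` times by Leibniz' rule and eliminating the unknown
`(y f_a)^{(k)}` gives
`(2a + 1 - k) f_{a+1}^{(k+1)} = 2(a+1) ((1 - x²) f_a^{(k+1)} - (k+1) x f_a^{(k)})`.
For `a = n - 1/2`, `k = n` the left coefficient is `n`, so the formula
`f_{n-1/2}^{(n)} = (-1)^n (2n)! / (2^n n!) · T_n · (1 - x²)^{-1/2}` propagates from `n` to `n + 1`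
by the Chebyshev identity `(1 - x²) T_n' - n x T_n = -n T_{n+1}`.
-/

theorem iteratedDeriv_succ_fun_id_mul {𝕜 : Type*} [NontriviallyNormedField 𝕜] {f : 𝕜 → 𝕜}
    {x : 𝕜} {n : ℕ} (hf : ContDiffAt 𝕜 (n + 1) f x) :
    iteratedDeriv (n + 1) (fun y => y * f y) x =
      x * iteratedDeriv (n + 1) f x + (n + 1) * iteratedDeriv n f x := by
  rw [iteratedDeriv_fun_mul (f := fun y => y) contDiffAt_fun_id hf, Finset.sum_range_succ',
    Finset.sum_range_succ']
  have hvanish : ∀ i ∈ Finset.range n, ((n + 1).choose (i + 2) : 𝕜) *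
      iteratedDeriv (i + 2) (fun y : 𝕜 => y) x * iteratedDeriv (n + 1 - (i + 2)) f x = 0 := by
    intro i _
    simp [iteratedDeriv_fun_id]
  rw [Finset.sum_eq_zero hvanish]
  simp only [zero_add, choose_one_right, cast_add, cast_one, iteratedDeriv_fun_id, one_ne_zero,
    ↓reduceIte, mul_one, add_tsub_cancel_right, choose_zero_right, one_mul, tsub_zero]
  ring

lemma one_sub_sq_pos {x : ℝ} (hx : x ∈ Ioo (-1 : ℝ) 1) : 0 < 1 - x ^ 2 := by
  nlinarith [hx.1, hx.2]

lemma contDiffAt_one_sub_sq_rpow (a : ℝ) {x : ℝ} (hx : x ∈ Ioo (-1 : ℝ) 1) {m : WithTop ℕ∞} :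
    ContDiffAt ℝ m (fun y : ℝ => (1 - y ^ 2) ^ a) x :=
  (contDiffAt_const.sub (contDiffAt_id.pow 2)).rpow_const_of_ne (one_sub_sq_pos hx).ne'

lemma hasDerivAt_one_sub_sq_rpow (a : ℝ) {x : ℝ} (hx : x ∈ Ioo (-1 : ℝ) 1) :
    HasDerivAt (fun y : ℝ => (1 - y ^ 2) ^ a) (-2 * a * x * (1 - x ^ 2) ^ (a - 1)) x := by
  convert ((hasDerivAt_pow 2 x).const_sub 1).rpow_const (p := a)
    (Or.inl (one_sub_sq_pos hx).ne') using 1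
  push_cast
  ring

lemma iteratedDeriv_one_sub_sq_rpow_add_one (a : ℝ) (k : ℕ) {x : ℝ} (hx : x ∈ Ioo (-1 : ℝ) 1) :
    (2 * a + 1 - k) * iteratedDeriv (k + 1) (fun y : ℝ => (1 - y ^ 2) ^ (a + 1)) x =
      2 * (a + 1) * ((1 - x ^ 2) * iteratedDeriv (k + 1) (fun y : ℝ => (1 - y ^ 2) ^ a) x -
        (k + 1) * x * iteratedDeriv k (fun y : ℝ => (1 - y ^ 2) ^ a) x) := by
  set f : ℝ → ℝ := fun y => (1 - y ^ 2) ^ a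
  have hU : ∀ᶠ y in 𝓝 x, y ∈ Ioo (-1 : ℝ) 1 := isOpen_Ioo.mem_nhds hx
  have hderiv : deriv (fun y : ℝ => (1 - y ^ 2) ^ (a + 1)) =ᶠ[𝓝 x]
      fun y => -2 * (a + 1) * (y * f y) := by
    filter_upwards [hU] with y hy
    rw [(hasDerivAt_one_sub_sq_rpow (a + 1) hy).deriv, add_sub_cancel_right]
    ring
  have hfactor : (fun y : ℝ => (1 - y ^ 2) ^ (a + 1)) =ᶠ[𝓝 x]
      fun y => f y - y * (y * f y) := by
    filter_upwards [hU] with y hy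
    rw [Real.rpow_add_one (one_sub_sq_pos hy).ne']
    ring
  have hf : ∀ {m : WithTop ℕ∞}, ContDiffAt ℝ m f x := contDiffAt_one_sub_sq_rpow a hx
  have hyf : ∀ {m : WithTop ℕ∞}, ContDiffAt ℝ m (fun y => y * f y) x := contDiffAt_fun_id.mul hf
  have h₁ : iteratedDeriv (k + 1) (fun y : ℝ => (1 - y ^ 2) ^ (a + 1)) x =
      -2 * (a + 1) * iteratedDeriv k (fun y => y * f y) x := by
    rw [iteratedDeriv_succ', hderiv.iteratedDeriv_eq, iteratedDeriv_const_mul_field]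
  have h₂ : iteratedDeriv (k + 1) (fun y : ℝ => (1 - y ^ 2) ^ (a + 1)) x =
      iteratedDeriv (k + 1) f x - x * (x * iteratedDeriv (k + 1) f x +
        (k + 1) * iteratedDeriv k f x) - (k + 1) * iteratedDeriv k (fun y => y * f y) x := by
    rw [hfactor.iteratedDeriv_eq, iteratedDeriv_fun_sub hf (contDiffAt_fun_id.mul hyf),
      iteratedDeriv_succ_fun_id_mul hyf, iteratedDeriv_succ_fun_id_mul hf]
    ring
  linear_combination 2 * (a + 1) * h₂ - (k + 1 : ℝ) * h₁

theorem Chebyshev.one_sub_X_sq_mul_derivative_T_sub_mul_X_mul_T (R : Type*) [CommRing R]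
    (n : ℤ) :
    (1 - X ^ 2) * derivative (Chebyshev.T R n) - (n : R[X]) * X * Chebyshev.T R n =
      -((n : R[X]) * Chebyshev.T R (n + 1)) := by
  have h := Chebyshev.one_sub_X_sq_mul_derivative_T_eq_poly_in_T (R := R) (n - 1)
  have h₂ := Chebyshev.T_add_two R (n - 1)
  rw [sub_add_cancel] at h
  rw [show n - 1 + 2 = n + 1 by ring, sub_add_cancel] at h₂
  push_cast at h
  linear_combination h + (n : R[X]) * h₂

lemma hasDerivAt_eval_mul_one_sub_sq_rpow (P : ℝ[X]) (a : ℝ) {x : ℝ} (hx : x ∈ Ioo (-1 : ℝ) 1) :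
    HasDerivAt (fun y => P.eval y * (1 - y ^ 2) ^ a)
      (((1 - x ^ 2) * (derivative P).eval x - 2 * a * x * P.eval x) / (1 - x ^ 2) *
        (1 - x ^ 2) ^ a) x := by
  refine ((P.hasDerivAt x).mul (hasDerivAt_one_sub_sq_rpow a hx)).congr_deriv ?_
  have hne := (one_sub_sq_pos hx).ne'
  rw [Real.rpow_sub_one hne]
  field_simp
  ring

noncomputable def chebyshevRodriguesCoeff (n : ℕ) : ℝ := (-1) ^ n * (2 * n)! / (2 ^ n * n !)

lemma chebyshevRodriguesCoeff_succ (n : ℕ) :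
    chebyshevRodriguesCoeff (n + 1) = -(2 * n + 1) * chebyshevRodriguesCoeff n := by
  rw [chebyshevRodriguesCoeff, chebyshevRodriguesCoeff, show 2 * (n + 1) = 2 * n + 1 + 1 by ring,
    Nat.factorial_succ, Nat.factorial_succ, Nat.factorial_succ]
  push_cast
  field_simp
  ring

theorem iteratedDeriv_one_sub_sq_rpow_nat_sub_half_succ {n : ℕ} (hn : n ≠ 0) {x : ℝ}
    (hx : x ∈ Ioo (-1 : ℝ) 1)
    (ih : ∀ y ∈ Ioo (-1 : ℝ) 1,
      iteratedDeriv n (fun y : ℝ => (1 - y ^ 2) ^ ((n : ℝ) - 1 / 2)) y =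
      chebyshevRodriguesCoeff n * ((Chebyshev.T ℝ n).eval y * (1 - y ^ 2) ^ (-(1 / 2) : ℝ))) :
    iteratedDeriv (n + 1) (fun y : ℝ => (1 - y ^ 2) ^ (((n + 1 : ℕ) : ℝ) - 1 / 2)) x =
      chebyshevRodriguesCoeff (n + 1) *
        ((Chebyshev.T ℝ (n + 1 : ℕ)).eval x * (1 - x ^ 2) ^ (-(1 / 2) : ℝ)) := by
  set c := chebyshevRodriguesCoeff n
  have hA : iteratedDeriv n (fun y : ℝ => (1 - y ^ 2) ^ ((n : ℝ) - 1 / 2)) =ᶠ[𝓝 x]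
      fun y => c * ((Chebyshev.T ℝ n).eval y * (1 - y ^ 2) ^ (-(1 / 2) : ℝ)) := by
    filter_upwards [isOpen_Ioo.mem_nhds hx] with y hy using ih y hy
  have hA' : (1 - x ^ 2) * iteratedDeriv (n + 1) (fun y : ℝ => (1 - y ^ 2) ^ ((n : ℝ) - 1 / 2)) x =
      c * ((1 - x ^ 2) * (derivative (Chebyshev.T ℝ n)).eval x + x * (Chebyshev.T ℝ n).eval x) *
        (1 - x ^ 2) ^ (-(1 / 2) : ℝ) := by
    rw [iteratedDeriv_succ, hA.deriv_eq,
      ((hasDerivAt_eval_mul_one_sub_sq_rpow (Chebyshev.T ℝ n) _ hx).const_mul c).deriv]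
    field_simp [(one_sub_sq_pos hx).ne']
    ring
  have hrec := iteratedDeriv_one_sub_sq_rpow_add_one ((n : ℝ) - 1 / 2) n hx
  rw [show (n : ℝ) - 1 / 2 + 1 = ((n + 1 : ℕ) : ℝ) - 1 / 2 by push_cast; ring, ih x hx] at hrec
  have hcheb := congrArg (eval x) (Chebyshev.one_sub_X_sq_mul_derivative_T_sub_mul_X_mul_T ℝ n)
  simp only [eval_sub, eval_mul, eval_pow, eval_X, eval_one, eval_neg,
    Int.cast_natCast, eval_natCast] at hcheb
  have hn' : (n : ℝ) ≠ 0 := Nat.cast_ne_zero.mpr hn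
  rw [chebyshevRodriguesCoeff_succ]
  push_cast at hrec ⊢
  apply mul_left_cancel₀ hn'
  linear_combination
    hrec + (2 * n + 1) * hA' + (2 * n + 1) * c * (1 - x ^ 2) ^ (-(1 / 2) : ℝ) * hcheb

theorem iteratedDeriv_one_sub_sq_rpow_nat_sub_half (n : ℕ) {x : ℝ} (hx : x ∈ Ioo (-1 : ℝ) 1) :
    iteratedDeriv n (fun y : ℝ => (1 - y ^ 2) ^ ((n : ℝ) - 1 / 2)) x =
      chebyshevRodriguesCoeff n * ((Chebyshev.T ℝ n).eval x * (1 - x ^ 2) ^ (-(1 / 2) : ℝ)) := by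
  induction n generalizing x with
  | zero => simp [chebyshevRodriguesCoeff]
  | succ n ih =>
    rcases eq_or_ne n 0 with rfl | hn
    · rw [iteratedDeriv_one, (hasDerivAt_one_sub_sq_rpow _ hx).deriv]
      norm_num [chebyshevRodriguesCoeff]
    · exact iteratedDeriv_one_sub_sq_rpow_nat_sub_half_succ hn hx fun y hy => ih hy

theorem stmt_13 (n : ℕ) (x : ℝ) (hx : x ∈ Set.Ioo (-1:ℝ) 1) :
    (Chebyshev.T ℝ n).eval x =
      ((-1 : ℝ) ^ n * 2 ^ n * n ! / (2 * n)!) * Real.sqrt (1 - x ^ 2) *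
        iteratedDeriv n (fun y : ℝ => (1 - y ^ 2) ^ ((n : ℝ) - 1 / 2)) x := by
  have hsqrt : Real.sqrt (1 - x ^ 2) * (1 - x ^ 2) ^ (-(1 / 2) : ℝ) = 1 := by
    rw [Real.sqrt_eq_rpow, ← Real.rpow_add (one_sub_sq_pos hx)]
    norm_num
  have hsign : ((-1 : ℝ) ^ n) ^ 2 = 1 := by
    rw [← pow_mul, mul_comm, pow_mul, neg_one_sq, one_pow]
  rw [iteratedDeriv_one_sub_sq_rpow_nat_sub_half n hx, chebyshevRodriguesCoeff]
  field_simp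
  rw [hsign, mul_one, mul_assoc, hsqrt, mul_one]
end
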